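/- arXiv:1201.4552 — 3 statements merged into one kernel-verified Lean document; each statement's English description precedes it below -/
import Mathlib

section
/- On the percolation event $\mathcal{P}$, the upper growth rate $\mathcal{X} = \limsup_{N\to\infty} \frac{1}{N}\log Z_N$ is $\mathbb{P}_p(\cdot\mid\mathcal{P})$-almost surely constant. -/
/-!
Write `𝓧 X = limsup N⁻¹ log Z_N(X)` and `θ_{k,x}` for the shift of the environment to the
space-time point `(k, x)`. Prepending an open path from `(0, 0)` to `(k, x)` injects the open
paths of length `N` of `θ_{k,x} X` into those of length `N + k` of `X`, so
`𝓧 (θ_{k,x} X) ≤ 𝓧 X` whenever `(k, x)` is reachable.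

Fix `a` with `β = ℙ(𝓧 > a) > 0`, and let `A` be the event that the origin reaches every level
while `𝓧 ≤ a`. Knowing the first `k` layers, pick measurably a reachable site `(k, x)`: the
environment `θ_{k,x} X` is independent of these layers and has `𝓧 > a` with probability `β`,
which is impossible on `A`. Hence `ℙ(A ∩ F) ≤ (1 - β) ℙ(F)` for every event `F` of the first
`k` layers, and approximating `A` by such events gives `ℙ(A) = 0`. So on `𝓟` every event
`{𝓧 > a}` is trivial, and `𝓧` is almost surely constant.
-/

open MeasureTheory ProbabilityTheory Filter

noncomputable section

/-- Transversal lattice `ℤ^d`. -/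
abbrev Zd (d : ℕ) := Fin d → ℤ

/-- A percolation environment on `ℕ × ℤ^d`: `X n x y` tells whether the oriented
edge from `(n, x)` to `(n+1, y)` is open. -/
abbrev Env (d : ℕ) := ℕ → Zd d → Zd d → Bool

/-- The edge variable associated to an edge `e = (n, x, y)`. -/
def edgeVal (d : ℕ) (e : ℕ × Zd d × Zd d) (X : Env d) : Bool := X e.1 e.2.1 e.2.2

/-- `pathCount d N X` = number of open oriented paths of length `N` starting at the origin. -/
def pathCount (d N : ℕ) (X : Env d) : ℕ :=
  Nat.card {S : Fin (N + 1) → Zd d //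
    S 0 = 0 ∧ ∀ i : Fin N, X i (S i.castSucc) (S i.succ) = true}

/-- `pathCountTo d N x X` = number of open oriented paths from `(0,0)` to `(N,x)`. -/
def pathCountTo (d N : ℕ) (x : Zd d) (X : Env d) : ℕ :=
  Nat.card {S : Fin (N + 1) → Zd d //
    S 0 = 0 ∧ S (Fin.last N) = x ∧ ∀ i : Fin N, X i (S i.castSucc) (S i.succ) = true}

/-- The renormalized partition function `W_N = p^{-N} Z_N`. -/
def W (d : ℕ) (p : ℝ) (N : ℕ) (X : Env d) : ℝ := (pathCount d N X : ℝ) / p ^ N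

/-- The percolation event: existence of an infinite open oriented path from the origin. -/
def percEvent (d : ℕ) : Set (Env d) :=
  {X | ∃ S : ℕ → Zd d, S 0 = 0 ∧ ∀ n, X n (S n) (S (n + 1)) = true}

/-- The sigma-algebra generated by the edge variables in time layers `0, …, N-1`. -/
def cylFilt (d : ℕ) (N : ℕ) : MeasurableSpace (Env d) :=
  MeasurableSpace.comap (fun X => fun (n : Fin N) (x y : Zd d) => X n x y) inferInstance

/-- The environment law: independent Bernoulli edge variables, the edge `(n,x) → (n+1,y)`
being open with probability `p · f (y - x)`. -/
def bernoulliEnv (d : ℕ) (p : ℝ) (f : Zd d → ℝ) (μ : Measure (Env d)) : Prop :=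
  iIndepFun (fun e : ℕ × Zd d × Zd d => edgeVal d e) μ ∧
  ∀ n x y, μ {X | X n x y = true} = ENNReal.ofReal (p * f (y - x))

/-- `N⁻¹ log Z_N` as an extended real, with value `⊥` when `Z_N = 0`. -/
def growthTerm (d : ℕ) (X : Env d) (N : ℕ) : EReal :=
  if pathCount d N X = 0 then ⊥ else ((Real.log (pathCount d N X) / N : ℝ) : EReal)

/-- The environment shifted in time by `N` and in space by `x`. -/
def shiftEnv (d N : ℕ) (x : Zd d) (X : Env d) : Env d := fun n u v => X (n + N) (u + x) (v + x)

/-- The size-biased (tilted) environment: all edges along the walk path `T` (up to time `N`)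
are forced open. -/
def tiltEnv (d N : ℕ) (T : Fin (N + 1) → Zd d) (X : Env d) : Env d := fun n x y =>
  if h : n < N then
    (if T ⟨n, Nat.lt_succ_of_lt h⟩ = x ∧ T ⟨n + 1, Nat.succ_lt_succ h⟩ = y then true else X n x y)
  else X n x y

/-- The probability that a random walk with step distribution `f` started at `0`
follows the path `T` up to time `N`. -/
def walkWeight (d N : ℕ) (f : Zd d → ℝ) (T : Fin (N + 1) → Zd d) : ℝ :=
  if T 0 = 0 then ∏ i : Fin N, f (T i.succ - T i.castSucc) else 0

/-- `(ℙ_p ⊗ P)(W̃_N ≤ K)`: the probability, under the environment law `μ` and an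
independent `f`-walk `T`, that the size-biased renormalized partition function
`W̃_N = p^{-N} Z̃_N` is at most `K`. -/
def tiltTailProb (d N : ℕ) (f : Zd d → ℝ) (p : ℝ) (μ : Measure (Env d)) (K : ℝ) : ℝ :=
  ∑ᶠ T : Fin (N + 1) → Zd d, walkWeight d N f T *
    (μ {X | (pathCount d N (tiltEnv d N T X) : ℝ) / p ^ N ≤ K}).toReal

/-- Tilted environment for an infinite walk `T`: all edges along `T` are forced open. -/
def tiltEnvFull (d : ℕ) (T : ℕ → Zd d) (X : Env d) : Env d := fun n x y =>
  if T n = x ∧ T (n + 1) = y then true else X n x y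

/-- The pinned size-biased partition function `Z̄_N`: number of oriented paths from `(0,0)`
to `(N, T_N)` which are open for the tilted environment. -/
def barZ (d N : ℕ) (T : ℕ → Zd d) (X : Env d) : ℕ :=
  Nat.card {S : Fin (N + 1) → Zd d // S 0 = 0 ∧ S (Fin.last N) = T N ∧
    ∀ i : Fin N, tiltEnvFull d T X i (S i.castSucc) (S i.succ) = true}

/-- Version of `Z̄_N` for a finite walk path `T` of length `N`. -/
def barZfin (d N : ℕ) (T : Fin (N + 1) → Zd d) (X : Env d) : ℕ :=
  Nat.card {S : Fin (N + 1) → Zd d // S 0 = 0 ∧ S (Fin.last N) = T (Fin.last N) ∧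
    ∀ i : Fin N, tiltEnv d N T X i (S i.castSucc) (S i.succ) = true}

/-- The environment shifted by `N` in time and `v` in space. -/
def envSpaceShift (d N : ℕ) (v : Zd d) (X : Env d) : Env d := fun n x y => X (n + N) (x + v) (y + v)

/-- The walk observed after time `N`, recentered at the origin. -/
def walkShift (d N : ℕ) (T : ℕ → Zd d) : ℕ → Zd d := fun n => T (n + N) - T N

/-- `ν` is the law of the random walk started at `0` with i.i.d. increments of law `f`. -/
def isWalkLaw (d : ℕ) (f : Zd d → ℝ) (ν : Measure (ℕ → Zd d)) : Prop :=
  ∀ (M : ℕ) (T' : Fin (M + 1) → Zd d),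
    ν {T | ∀ i : Fin (M + 1), T (i : ℕ) = T' i} = ENNReal.ofReal (walkWeight d M f T')

/-- Monotone coupling of environments at all parameters via uniform variables. -/
def coupledEnv {Ω : Type*} (d : ℕ) (f : Zd d → ℝ) (U : ℕ → Zd d → Zd d → Ω → ℝ)
    (q : ℝ) (ω : Ω) : Env d := fun n x y => decide (U n x y ω ≤ f (y - x) * q)

/-- `k`-fold discrete convolution `f^{∗k}` (the `k`-step transition probability). -/
def fconv (d : ℕ) (f : Zd d → ℝ) : ℕ → Zd d → ℝ
  | 0 => fun z => if z = 0 then 1 else 0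
  | (k + 1) => fun z => ∑ᶠ y, f y * fconv d f k (z - y)


open scoped ENNReal

theorem MeasureTheory.measure_eq_zero_of_measure_inter_le_mul {Ω : Type*}
    {m : MeasurableSpace Ω} {μ : Measure Ω} [IsFiniteMeasure μ] {ℱ : ℕ → MeasurableSpace Ω}
    (hℱ : Monotone ℱ) (hgen : ⨆ n, ℱ n = m) {A : Set Ω} (hA : MeasurableSet A) {c : ℝ≥0∞}
    (hc : c < 1) (h : ∀ n F, MeasurableSet[ℱ n] F → μ (A ∩ F) ≤ c * μ F) : μ A = 0 := by
  have hring : IsSetRing {F : Set Ω | ∃ n, MeasurableSet[ℱ n] F} := by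
    refine ⟨⟨0, @MeasurableSet.empty _ (ℱ 0)⟩, ?_, ?_⟩
    · rintro s t ⟨i, hs⟩ ⟨j, ht⟩
      exact ⟨max i j, (hℱ (le_max_left i j) _ hs).union (hℱ (le_max_right i j) _ ht)⟩
    · rintro s t ⟨i, hs⟩ ⟨j, ht⟩
      exact ⟨max i j, (hℱ (le_max_left i j) _ hs).diff (hℱ (le_max_right i j) _ ht)⟩
  have hcover : ∃ D : Set (Set Ω), D.Countable ∧ D ⊆ {F | ∃ n, MeasurableSet[ℱ n] F} ∧
      μ (⋃₀ D)ᶜ = 0 :=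
    ⟨{Set.univ}, Set.countable_singleton _,
      Set.singleton_subset_iff.2 ⟨0, @MeasurableSet.univ _ (ℱ 0)⟩, by simp⟩
  have hle : μ A ≤ c * μ A := by
    refine ENNReal.le_of_forall_pos_le_add fun ε hε _ => ?_
    obtain ⟨F, ⟨n, hF⟩, hFA⟩ := exists_measure_symmDiff_lt_of_generateFrom_isSetRing hring
      hcover (by rw [← hgen, MeasurableSpace.measurableSpace_iSup_eq]) hA
      (ε := ε / 2) (by simpa using hε.ne')
    have hA_sdiff : μ (A \ F) ≤ ε / 2 := (measure_mono fun x hx => Or.inr hx).trans hFA.le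
    have hF_le : μ F ≤ μ A + ε / 2 :=
      (measure_le_inter_add_sdiff μ F A).trans <| add_le_add
        (measure_mono Set.inter_subset_right) ((measure_mono fun x hx => Or.inl hx).trans hFA.le)
    calc μ A ≤ μ (A ∩ F) + μ (A \ F) := measure_le_inter_add_sdiff μ A F
    _ ≤ c * (μ A + ε / 2) + ε / 2 := add_le_add ((h n F hF).trans (by gcongr)) hA_sdiff
    _ ≤ c * μ A + 1 * (ε / 2) + ε / 2 := by rw [mul_add]; gcongr
    _ = c * μ A + ε := by rw [one_mul, add_assoc, ENNReal.add_halves]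
  by_contra hA0
  exact hle.not_gt (by simpa using (ENNReal.mul_lt_mul_iff_left hA0 (measure_ne_top μ A)).2 hc)

lemma MeasureTheory.Measure.bool_ext {ν₁ ν₂ : Measure Bool} [IsProbabilityMeasure ν₁]
    [IsProbabilityMeasure ν₂] (h : ν₁ {true} = ν₂ {true}) : ν₁ = ν₂ := by
  refine Measure.ext_of_singleton fun b => ?_
  cases b
  · rw [show ({false} : Set Bool) = {true}ᶜ by ext b; simp,
      prob_compl_eq_one_sub (measurableSet_singleton _),
      prob_compl_eq_one_sub (measurableSet_singleton _), h]
  · exact h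

lemma natCard_eq_floor_toReal_enatCard (α : Type*) :
    Nat.card α = ⌊((ENat.card α : ℝ≥0∞)).toReal⌋₊ := by
  rcases finite_or_infinite α with h | h
  · rw [ENat.card_eq_coe_natCard]; simp
  · simp

theorem measurable_natCard_subtype {α β : Type*} [Countable α] [MeasurableSpace β]
    {T : β → α → Prop} (hT : ∀ a, MeasurableSet {x | T x a}) :
    Measurable fun x => Nat.card {a // T x a} := by
  have hsum : ∀ x, (ENat.card {a // T x a} : ℝ≥0∞) = ∑' a, {y | T y a}.indicator 1 x := by
    intro x
    rw [← ENNReal.tsum_one]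
    exact tsum_subtype {a | T x a} (fun _ => (1 : ℝ≥0∞))
  simp_rw [natCard_eq_floor_toReal_enatCard, hsum]
  exact (Measurable.tsum fun a => measurable_const.indicator (hT a)).ennreal_toReal.nat_floor

theorem limsup_logGrowth_le_of_le_add {u v : ℕ → ℕ} {k : ℕ} (huv : ∀ N, u N ≤ v (N + k)) :
    limsup (fun N => if u N = 0 then (⊥ : EReal) else ((Real.log (u N) / N : ℝ) : EReal)) atTop
      ≤ limsup (fun N => if v N = 0 then (⊥ : EReal) else ((Real.log (v N) / N : ℝ) : EReal))
        atTop := by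
  refine EReal.ge_of_forall_gt_iff_ge.1 fun r hr => ?_
  obtain ⟨r', hrr', hr'⟩ := EReal.exists_between_coe_real hr
  rw [EReal.coe_lt_coe_iff] at hrr'
  have hfreq := frequently_lt_of_lt_limsup (by isBoundedDefault) hr'
  have hlin : Tendsto (fun N : ℕ => (r' - r) * N) atTop atTop :=
    tendsto_natCast_atTop_atTop.const_mul_atTop (by linarith)
  have hev : ∀ᶠ N : ℕ in atTop, 1 ≤ N ∧ r * (N + k) ≤ r' * N := by
    filter_upwards [hlin.eventually_ge_atTop (r * k), eventually_ge_atTop 1] with N hN hN1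
    exact ⟨hN1, by linarith⟩
  refine le_limsup_of_frequently_le ((tendsto_add_atTop_nat k).frequently ?_)
    (by isBoundedDefault)
  refine (hfreq.and_eventually hev).mono fun N ⟨hN, hN1, hNk⟩ => ?_
  have hu : u N ≠ 0 := by rintro h; simp [h] at hN
  have hv : v (N + k) ≠ 0 := fun h => hu (Nat.eq_zero_of_le_zero (h ▸ huv N))
  simp only [hu, hv, if_false, EReal.coe_lt_coe_iff, EReal.coe_le_coe_iff] at hN ⊢
  rw [lt_div_iff₀ (by exact_mod_cast hN1)] at hN
  rw [le_div_iff₀ (by positivity), Nat.cast_add]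
  have hlog : Real.log (u N) ≤ Real.log (v (N + k)) :=
    Real.log_le_log (by exact_mod_cast Nat.pos_of_ne_zero hu) (by exact_mod_cast huv N)
  linarith

namespace OrientedPercolation

variable {d : ℕ}

def reachSet (d k : ℕ) (x : Zd d) : Set (Env d) :=
  {X | ∃ S : Fin (k + 1) → Zd d, S 0 = 0 ∧ S (Fin.last k) = x ∧
    ∀ i : Fin k, X i (S i.castSucc) (S i.succ) = true}

/-- On this almost sure event the open paths of a given length are finitely many, so that
`pathCount` is not the junk value that `Nat.card` gives infinite types. -/
def goodSet (d : ℕ) (f : Zd d → ℝ) : Set (Env d) :=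
  {X | ∀ n x y, X n x y = true → f (y - x) ≠ 0}

lemma measurable_edgeVal (e : ℕ × Zd d × Zd d) : Measurable (edgeVal d e) := by
  unfold edgeVal; fun_prop

lemma measurable_shiftEnv (k : ℕ) (x : Zd d) : Measurable (shiftEnv d k x) := by
  unfold shiftEnv; fun_prop

lemma measurableSet_eval_eq {I : Type*} (n : I) (x y : Zd d) (b : Bool) :
    MeasurableSet {X : I → Zd d → Zd d → Bool | X n x y = b} :=
  (by fun_prop : Measurable fun X : I → Zd d → Zd d → Bool => X n x y)
    (measurableSet_singleton _)

lemma measurableSet_reachSet (k : ℕ) (x : Zd d) :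
    MeasurableSet[cylFilt d k] (reachSet d k x) := by
  refine ⟨{Y | ∃ S : Fin (k + 1) → Zd d, S 0 = 0 ∧ S (Fin.last k) = x ∧
    ∀ i : Fin k, Y i (S i.castSucc) (S i.succ) = true}, ?_, rfl⟩
  simp only [Set.ofPred_exists, Set.ofPred_and, Set.ofPred_forall]
  exact MeasurableSet.iUnion fun S => (MeasurableSet.const _).inter <|
    (MeasurableSet.const _).inter <| MeasurableSet.iInter fun i => measurableSet_eval_eq _ _ _ _

lemma measurableSet_goodSet (f : Zd d → ℝ) : MeasurableSet (goodSet d f) := by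
  simp only [goodSet, Set.ofPred_forall]
  refine MeasurableSet.iInter fun n => MeasurableSet.iInter fun x =>
    MeasurableSet.iInter fun y => ?_
  by_cases h : f (y - x) = 0
  · simpa [h] using measurableSet_eval_eq n x y false
  · simp [h]

lemma measurable_pathCount (N : ℕ) : Measurable (pathCount d N) :=
  measurable_natCard_subtype fun S => by
    simp only [Set.ofPred_and, Set.ofPred_forall]
    exact (MeasurableSet.const _).inter <|
      MeasurableSet.iInter fun i => measurableSet_eval_eq _ _ _ _

lemma measurable_limsup_growthTerm :
    Measurable fun X : Env d => limsup (growthTerm d X) atTop :=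
  Measurable.limsup fun N => (measurable_from_nat (f := fun n : ℕ =>
    if n = 0 then (⊥ : EReal) else ((Real.log n / N : ℝ) : EReal))).comp (measurable_pathCount N)

lemma measure_goodSet_compl {p : ℝ} {f : Zd d → ℝ} {μ : Measure (Env d)}
    (hmarg : ∀ n x y, μ {X | X n x y = true} = ENNReal.ofReal (p * f (y - x))) :
    μ (goodSet d f)ᶜ = 0 := by
  refine measure_mono_null (t := ⋃ n, ⋃ x, ⋃ y, {X : Env d | X n x y = true ∧ f (y - x) = 0})
    ?_ (measure_iUnion_null fun n => measure_iUnion_null fun x => measure_iUnion_null fun y => ?_)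
  · intro X hX
    simp only [goodSet, Set.mem_compl_iff, Set.mem_ofPred_eq, not_forall, not_not] at hX
    obtain ⟨n, x, y, h1, h2⟩ := hX
    exact Set.mem_iUnion.2 ⟨n, Set.mem_iUnion.2 ⟨x, Set.mem_iUnion.2 ⟨y, h1, h2⟩⟩⟩
  · by_cases h : f (y - x) = 0
    · rw [Set.ofPred_and]
      refine measure_mono_null Set.inter_subset_left ?_
      rw [hmarg, h, mul_zero, ENNReal.ofReal_zero]
    · simp [h]

lemma cylFilt_mono : Monotone (cylFilt d) := fun k l hkl =>
  ((by fun_prop : Measurable fun Y : Fin l → Zd d → Zd d → Bool => fun n : Fin k =>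
    Y (Fin.castLE hkl n)).comp
      (comap_measurable fun X : Env d => fun (n : Fin l) (x y : Zd d) => X n x y)).comap_le

lemma iSup_cylFilt : ⨆ k, cylFilt d k = (inferInstance : MeasurableSpace (Env d)) := by
  refine le_antisymm (iSup_le fun k => (by fun_prop : Measurable fun X : Env d =>
    fun (n : Fin k) (x y : Zd d) => X n x y).comap_le) ?_
  set m := ⨆ k, cylFilt d k
  have hcoord : ∀ n x y, Measurable[m] fun X : Env d => X n x y := fun n x y =>
    ((by fun_prop : Measurable fun Y : Fin (n + 1) → Zd d → Zd d → Bool =>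
      Y (Fin.last n) x y).comp
        (comap_measurable fun X : Env d => fun (n : Fin (n + 1)) (x y : Zd d) => X n x y)).mono
          (le_iSup (cylFilt d) (n + 1)) le_rfl
  have hid : @Measurable (Env d) (Env d) m MeasurableSpace.pi id :=
    measurable_pi_lambda _ fun n => measurable_pi_lambda _ fun x =>
      measurable_pi_lambda _ fun y => hcoord n x y
  simpa only [MeasurableSpace.comap_id] using hid.comap_le

lemma cylFilt_le (k : ℕ) : cylFilt d k ≤ (inferInstance : MeasurableSpace (Env d)) :=
  iSup_cylFilt (d := d) ▸ le_iSup (cylFilt d) k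

lemma comap_le_iSup_comap_edgeVal {I : Type*} (F : Env d → I → Zd d → Zd d → Bool)
    (s : Set (ℕ × Zd d × Zd d)) (hF : ∀ i u v, ∃ e ∈ s, ∀ X, F X i u v = edgeVal d e X) :
    MeasurableSpace.comap F inferInstance ≤
      ⨆ e ∈ s, MeasurableSpace.comap (edgeVal d e) inferInstance := by
  set m := ⨆ e ∈ s, MeasurableSpace.comap (edgeVal d e) inferInstance
  have hcoord : ∀ i u v, Measurable[m] fun X => F X i u v := by
    intro i u v
    obtain ⟨e, he, hFe⟩ := hF i u v
    rw [show (fun X => F X i u v) = edgeVal d e from funext hFe]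
    exact (comap_measurable (edgeVal d e)).mono (le_iSup₂ (f := fun e (_ : e ∈ s) =>
      MeasurableSpace.comap (edgeVal d e) inferInstance) e he) le_rfl
  have hFm : Measurable[m] F :=
    measurable_pi_lambda _ fun i => measurable_pi_lambda _ fun u =>
      measurable_pi_lambda _ fun v => hcoord i u v
  exact hFm.comap_le

lemma indep_cylFilt_comap_shiftEnv {μ : Measure (Env d)}
    (hind : iIndepFun (fun e => edgeVal d e) μ) (k : ℕ) (x : Zd d) :
    Indep (cylFilt d k) (MeasurableSpace.comap (shiftEnv d k x) inferInstance) μ := by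
  have h := indep_iSup_of_disjoint (fun e => (measurable_edgeVal e).comap_le)
    ((iIndepFun_iff_iIndep _ _ _).1 hind) (S := {e | e.1 < k}) (T := {e | k ≤ e.1})
    (Set.disjoint_left.2 fun e h1 h2 => (Nat.lt_irrefl _ (h1.trans_le h2)))
  refine indep_of_indep_of_le_left (indep_of_indep_of_le_right h ?_) ?_
  · exact comap_le_iSup_comap_edgeVal _ _ fun n u v =>
      ⟨(n + k, u + x, v + x), Nat.le_add_left k n, fun _ => rfl⟩
  · exact comap_le_iSup_comap_edgeVal _ _ fun n u v => ⟨(n, u, v), n.isLt, fun _ => rfl⟩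

lemma map_shiftEnv {p : ℝ} {f : Zd d → ℝ} {μ : Measure (Env d)} [IsProbabilityMeasure μ]
    (henv : bernoulliEnv d p f μ) (k : ℕ) (x : Zd d) : μ.map (shiftEnv d k x) = μ := by
  obtain ⟨hind, hmarg⟩ := henv
  set Φ : Env d → (ℕ × Zd d × Zd d → Bool) := fun X e => edgeVal d e X
  have hΦ : Measurable Φ := measurable_pi_lambda _ measurable_edgeVal
  set σ : ℕ × Zd d × Zd d → ℕ × Zd d × Zd d := fun e => (e.1 + k, e.2.1 + x, e.2.2 + x)
  have hσ : σ.Injective := fun e e' h => by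
    simp only [σ, Prod.mk.injEq, add_left_inj] at h
    exact Prod.ext h.1 (Prod.ext h.2.1 h.2.2)
  have hprob : ∀ e, IsProbabilityMeasure (μ.map (edgeVal d e)) := fun e =>
    Measure.isProbabilityMeasure_map (measurable_edgeVal e).aemeasurable
  have hmarg_σ : ∀ e, μ.map (edgeVal d (σ e)) = μ.map (edgeVal d e) := fun e => by
    refine Measure.bool_ext ?_
    rw [Measure.map_apply (measurable_edgeVal _) (measurableSet_singleton _),
      Measure.map_apply (measurable_edgeVal _) (measurableSet_singleton _)]
    change μ {X | X _ _ _ = true} = μ {X | X _ _ _ = true}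
    rw [hmarg, hmarg]
    simp [σ]
  -- The law of `Φ` is the product of the edge marginals, and `σ` preserves these.
  have hΦθ : (μ.map (shiftEnv d k x)).map Φ = μ.map Φ := by
    rw [Measure.map_map hΦ (measurable_shiftEnv k x),
      show Φ ∘ shiftEnv d k x = (fun ω e => ω (σ e)) ∘ Φ from rfl,
      ← Measure.map_map (by fun_prop) hΦ, hind.map_fun_eq_infinitePi_map measurable_edgeVal,
      Measure.map_infinitePi_infinitePi_of_inj hσ]
    simp_rw [hmarg_σ]
  have hinv : ∀ ν : Measure (Env d), (ν.map Φ).map (fun ω n u v => ω (n, u, v)) = ν :=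
    fun ν => by
      rw [Measure.map_map (by fun_prop) hΦ]
      exact Measure.map_id
  rw [← hinv (μ.map _), hΦθ, hinv]

lemma path_ext {G : Type*} [AddGroup G] {N : ℕ} {S S' : Fin (N + 1) → G} (h0 : S 0 = S' 0)
    (h : ∀ i : Fin N, S i.succ - S i.castSucc = S' i.succ - S' i.castSucc) : S = S' := by
  funext j
  induction j using Fin.induction with
  | zero => exact h0
  | succ i ih =>
    rw [← sub_add_cancel (S i.succ) (S i.castSucc), ← sub_add_cancel (S' i.succ) (S' i.castSucc),
      h i, ih]

lemma finite_openPaths {f : Zd d → ℝ} (hfin : (Function.support f).Finite) {X : Env d}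
    (hX : X ∈ goodSet d f) (N : ℕ) :
    Finite {S : Fin (N + 1) → Zd d //
      S 0 = 0 ∧ ∀ i : Fin N, X i (S i.castSucc) (S i.succ) = true} := by
  have : Finite (Function.support f) := hfin
  refine Finite.of_injective (β := Fin N → Function.support f)
    (fun S i => ⟨S.1 i.succ - S.1 i.castSucc, hX _ _ _ (S.2.2 i)⟩) fun S S' h => ?_
  exact Subtype.ext <|
    path_ext (S.2.1.trans S'.2.1.symm) fun i => congrArg Subtype.val (congrFun h i)

def concatPath (k N : ℕ) (x : Zd d) (P : Fin (k + 1) → Zd d) (S : Fin (N + 1) → Zd d) :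
    Fin (N + k + 1) → Zd d :=
  fun j => if h : (j : ℕ) < k then P ⟨j, by omega⟩ else S ⟨j - k, by omega⟩ + x

lemma concatPath_injective (k N : ℕ) (x : Zd d) (P : Fin (k + 1) → Zd d) :
    Function.Injective (concatPath k N x P) := by
  intro S S' h
  funext j
  simpa [concatPath] using congrFun h ⟨j + k, by omega⟩

lemma concatPath_zero {k N : ℕ} {x : Zd d} {P : Fin (k + 1) → Zd d} {S : Fin (N + 1) → Zd d}
    (hP0 : P 0 = 0) (hPx : P (Fin.last k) = x) (hS0 : S 0 = 0) :
    concatPath k N x P S 0 = 0 := by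
  by_cases hk : k = 0
  · subst hk
    simp [concatPath, ← hPx, hP0, hS0]
  · simpa [concatPath, Nat.pos_of_ne_zero hk] using hP0

lemma concatPath_open {X : Env d} {k N : ℕ} {x : Zd d} {P : Fin (k + 1) → Zd d}
    {S : Fin (N + 1) → Zd d} (hPx : P (Fin.last k) = x)
    (hPo : ∀ i : Fin k, X i (P i.castSucc) (P i.succ) = true) (hS0 : S 0 = 0)
    (hSo : ∀ i : Fin N, shiftEnv d k x X i (S i.castSucc) (S i.succ) = true) (i : Fin (N + k)) :
    X i (concatPath k N x P S i.castSucc) (concatPath k N x P S i.succ) = true := by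
  simp only [concatPath, Fin.val_castSucc, Fin.val_succ]
  split_ifs with h1 h2 h2
  · exact hPo ⟨i, h1⟩
  · have e1 : (⟨i + 1 - k, by omega⟩ : Fin (N + 1)) = 0 := Fin.ext (by simp; omega)
    have e2 : (⟨i + 1, by omega⟩ : Fin (k + 1)) = Fin.last k := Fin.ext (by simp; omega)
    rw [e1, hS0, zero_add, ← hPx, ← e2]
    exact hPo ⟨i, h1⟩
  · omega
  · have := hSo ⟨i - k, by omega⟩
    simp only [shiftEnv] at this
    convert this using 4
    · omega
    · rfl
    · exact Fin.ext (by simp; omega)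

lemma pathCount_shiftEnv_le {f : Zd d → ℝ} (hfin : (Function.support f).Finite) {X : Env d}
    (hX : X ∈ goodSet d f) {k : ℕ} {x : Zd d} (hreach : X ∈ reachSet d k x) (N : ℕ) :
    pathCount d N (shiftEnv d k x X) ≤ pathCount d (N + k) X := by
  obtain ⟨P, hP0, hPx, hPo⟩ := hreach
  have := finite_openPaths hfin hX (N + k)
  exact Nat.card_le_card_of_injective
    (fun S => ⟨concatPath k N x P S, concatPath_zero hP0 hPx S.2.1,
      concatPath_open hPx hPo S.2.1 S.2.2⟩)
    fun S S' h => Subtype.ext (concatPath_injective k N x P (congrArg Subtype.val h))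

lemma limsup_growthTerm_shiftEnv_le {f : Zd d → ℝ} (hfin : (Function.support f).Finite)
    {X : Env d} (hX : X ∈ goodSet d f) {k : ℕ} {x : Zd d} (hreach : X ∈ reachSet d k x) :
    limsup (growthTerm d (shiftEnv d k x X)) atTop ≤ limsup (growthTerm d X) atTop :=
  limsup_logGrowth_le_of_le_add (pathCount_shiftEnv_le hfin hX hreach)

lemma percEvent_subset_iUnion_reachSet (k : ℕ) : percEvent d ⊆ ⋃ x, reachSet d k x := by
  rintro X ⟨T, hT0, hTo⟩
  exact Set.mem_iUnion.2
    ⟨T k, fun i => T i, by simpa using hT0, by simp, fun i => by simpa using hTo i⟩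

lemma measure_eq_zero_of_forall_shiftEnv_notMem {p : ℝ} {f : Zd d → ℝ} {μ : Measure (Env d)}
    [IsProbabilityMeasure μ] (henv : bernoulliEnv d p f μ) {A G : Set (Env d)}
    (hA : MeasurableSet A) (hG : MeasurableSet G) (hG0 : μ G ≠ 0)
    (hreach : ∀ k, A ⊆ ⋃ x, reachSet d k x)
    (hshift : ∀ k x, ∀ X ∈ A, X ∈ reachSet d k x → shiftEnv d k x X ∉ G) : μ A = 0 := by
  refine measure_eq_zero_of_measure_inter_le_mul cylFilt_mono iSup_cylFilt hA (c := μ Gᶜ) ?_ ?_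
  · rw [prob_compl_eq_one_sub hG]
    exact ENNReal.sub_lt_self ENNReal.one_ne_top one_ne_zero hG0
  intro k F hF
  -- Each `X` is charged to the first site `e n` of level `k` that it reaches.
  obtain ⟨e, he⟩ := exists_surjective_nat (Zd d)
  set D := disjointed fun n => reachSet d k (e n)
  have hD : ∀ n, MeasurableSet[cylFilt d k] (D n) :=
    MeasurableSet.disjointed fun n => measurableSet_reachSet k (e n)
  have hFD : ∀ n, MeasurableSet (F ∩ D n) := fun n => cylFilt_le k _ (hF.inter (hD n))
  have hdisj : Pairwise (Function.onFun Disjoint fun n => F ∩ D n) := fun m n hmn =>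
    (disjoint_disjointed _ hmn).mono Set.inter_subset_right Set.inter_subset_right
  have hcover : A ∩ F ⊆ ⋃ n, F ∩ D n ∩ shiftEnv d k (e n) ⁻¹' Gᶜ := by
    rintro X ⟨hXA, hXF⟩
    have hXD : X ∈ ⋃ n, D n := by
      rw [iUnion_disjointed]
      obtain ⟨x, hx⟩ := Set.mem_iUnion.1 (hreach k hXA)
      obtain ⟨m, rfl⟩ := he x
      exact Set.mem_iUnion.2 ⟨m, hx⟩
    obtain ⟨n, hn⟩ := Set.mem_iUnion.1 hXD
    exact Set.mem_iUnion.2 ⟨n, ⟨hXF, hn⟩, hshift k (e n) X hXA (disjointed_subset _ n hn)⟩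
  have hindep : ∀ n, μ (F ∩ D n ∩ shiftEnv d k (e n) ⁻¹' Gᶜ) = μ (F ∩ D n) * μ Gᶜ := fun n => by
    rw [(Indep_iff _ _ _).1 (indep_cylFilt_comap_shiftEnv henv.1 k (e n)) _ _ (hF.inter (hD n))
      ⟨Gᶜ, hG.compl, rfl⟩, ← Measure.map_apply (measurable_shiftEnv k (e n)) hG.compl,
      map_shiftEnv henv]
  calc μ (A ∩ F) ≤ μ (⋃ n, F ∩ D n ∩ shiftEnv d k (e n) ⁻¹' Gᶜ) := measure_mono hcover
  _ = ∑' n, μ (F ∩ D n) * μ Gᶜ := by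
    rw [measure_iUnion (fun m n hmn => (hdisj hmn).mono Set.inter_subset_left
      Set.inter_subset_left) fun n => (hFD n).inter (measurable_shiftEnv k (e n) hG.compl)]
    exact tsum_congr hindep
  _ = μ (F ∩ ⋃ n, D n) * μ Gᶜ := by
    rw [ENNReal.tsum_mul_right, Set.inter_iUnion, measure_iUnion hdisj hFD]
  _ ≤ μ Gᶜ * μ F := by
    rw [mul_comm]
    exact mul_le_mul_right (measure_mono Set.inter_subset_left) _

lemma ae_cond_percEvent_lt_or_not_lt {p : ℝ} {f : Zd d → ℝ}
    (hfin : (Function.support f).Finite) {μ : Measure (Env d)} [IsProbabilityMeasure μ]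
    (henv : bernoulliEnv d p f μ) (a : EReal) :
    (∀ᵐ X ∂μ[|percEvent d], a < limsup (growthTerm d X) atTop) ∨
      ∀ᵐ X ∂μ[|percEvent d], ¬ a < limsup (growthTerm d X) atTop := by
  set g : Env d → EReal := fun X => limsup (growthTerm d X) atTop
  have hg : Measurable g := measurable_limsup_growthTerm
  by_cases hG : μ {X | a < g X} = 0
  · exact Or.inr (cond_absolutelyContinuous.ae_le (measure_eq_zero_iff_ae_notMem.1 hG))
  set A := (⋂ k, ⋃ x, reachSet d k x) ∩ goodSet d f ∩ {X | g X ≤ a}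
  have hA : MeasurableSet A :=
    ((MeasurableSet.iInter fun k => MeasurableSet.iUnion fun x =>
      cylFilt_le k _ (measurableSet_reachSet k x)).inter (measurableSet_goodSet f)).inter
      (hg measurableSet_Iic)
  have hA0 : μ A = 0 :=
    measure_eq_zero_of_forall_shiftEnv_notMem henv hA (hg measurableSet_Ioi) hG
      (fun k X hX => Set.mem_iInter.1 hX.1.1 k) fun k x X hX hx hθ =>
        (hθ.trans_le (limsup_growthTerm_shiftEnv_le hfin hX.1.2 hx)).not_ge hX.2
  refine Or.inl (ae_iff.2 ?_)
  change μ[{X | ¬ a < g X} | percEvent d] = 0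
  rw [cond_apply' (t := {X | ¬ a < g X}) (hg measurableSet_Ioi).compl]
  refine mul_eq_zero_of_right _ (measure_mono_null ?_
    (measure_union_null hA0 (measure_goodSet_compl henv.2)))
  rintro X ⟨hP, hX⟩
  by_cases hXg : X ∈ goodSet d f
  · exact Or.inl ⟨⟨Set.mem_iInter.2 fun k => percEvent_subset_iUnion_reachSet k hP, hXg⟩,
      not_lt.1 hX⟩
  · exact Or.inr hXg

end OrientedPercolation

theorem stmt3_general (d : ℕ) (f : Zd d → ℝ)
    (hfin : (Function.support f).Finite)
    (p : ℝ)
    (μ : Measure (Env d)) [IsProbabilityMeasure μ]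
    (henv : bernoulliEnv d p f μ) :
    ∃ c : EReal, ∀ᵐ X ∂(μ[|percEvent d]), Filter.limsup (growthTerm d X) atTop = c :=
  exists_eventuallyEq_const_of_forall_separating (· ∈ Set.range Set.Ioi) fun _ ⟨a, ha⟩ =>
    ha ▸ OrientedPercolation.ae_cond_percEvent_lt_or_not_lt hfin henv a

/-- On the percolation event, `𝓧 = limsup_N N⁻¹ log Z_N` is
almost surely constant under `ℙ_p(· ∣ 𝓟)`. -/
theorem stmt3 (d : ℕ) (f : Zd d → ℝ) (hf0 : ∀ z, 0 ≤ f z)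
    (hfin : (Function.support f).Finite) (hsum : ∑ᶠ z, f z = 1)
    (p : ℝ) (hp : 0 < p) (hpmax : ∀ z, p * f z ≤ 1)
    (μ : Measure (Env d)) [IsProbabilityMeasure μ]
    (henv : bernoulliEnv d p f μ)
    (hP : 0 < μ (percEvent d)) :
    ∃ c : EReal, ∀ᵐ X ∂(μ[|percEvent d]), Filter.limsup (growthTerm d X) atTop = c :=
  stmt3_general d f hfin p μ henv
end
end

section
/- Couple all percolation parameters by setting $X_{(n,x),(n+1,y)}(p) := \mathbf{1}\{U_{(n,x),(n+1,y)} \le f(y-x)p\}$ for an i.i.d. family of Uniform$[0,1]$ variables $U$. Then for $p'\le p$ (with $p>0$), $\mathbb{E}[W_N(p')\mid \mathcal{F}_p] = W_N(p)$, where $\mathcal{F}_p$ is the sigma-algebra generated by the variables $X(p)$ and $W_N(q)=q^{-N}Z_N(X(q))$. -/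
open MeasureTheory ProbabilityTheory Filter

noncomputable section

/-!
Write `Z_N(X(q))` as the sum, over the finitely many paths whose steps lie in the support of
`f`, of the indicator that all `N` edges of the path are open at level `q`. Given `𝓕_p`, an
edge closed at level `p` stays closed at level `p'`, while an edge open at level `p`
is open at level `p'` with probability `p'/p`, independently of everything else. Hence
`E[1{S open at p'} ∣ 𝓕_p] = (p'/p)^N 1{S open at p}`, and summing over `S` gives the claim.
The conditional identity, `μ(s ∩ {S open at p'}) = (p'/p)^N μ(s ∩ {S open at p})` for
`s ∈ 𝓕_p`, is checked on finite intersections of generating events, where it factorises by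
independence, and extends to `𝓕_p` by the π-λ theorem.
-/

open scoped ENNReal

section Thinning

variable {Ω ι : Type*} {mΩ : MeasurableSpace Ω}

lemma subset_or_disjoint_of_measurableSet_generateFrom_singleton {A t : Set Ω}
    (ht : MeasurableSet[MeasurableSpace.generateFrom {A}] t) : A ⊆ t ∨ Disjoint A t := by
  rw [MeasurableSpace.generateFrom_singleton] at ht
  obtain ⟨T, -, rfl⟩ := ht
  by_cases hT : True ∈ T
  · exact Or.inl fun ω hω => by simpa [hω] using hT
  · exact Or.inr <| Set.disjoint_left.mpr fun ω hω => by simpa [hω] using hT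

lemma measure_inter_eq_mul_of_measurableSet_generateFrom_singleton {μ : Measure Ω}
    {A B t : Set Ω} {r : ℝ≥0∞} (hBA : B ⊆ A) (hr : μ B = r * μ A)
    (ht : MeasurableSet[MeasurableSpace.generateFrom {A}] t) :
    μ (t ∩ B) = r * μ (t ∩ A) := by
  rcases subset_or_disjoint_of_measurableSet_generateFrom_singleton ht with hAt | hAt
  · rwa [Set.inter_eq_right.mpr (hBA.trans hAt), Set.inter_eq_right.mpr hAt]
  · rw [Set.disjoint_iff_inter_eq_empty.mp (hAt.mono_left hBA).symm,
      Set.disjoint_iff_inter_eq_empty.mp hAt.symm, measure_empty, mul_zero]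

lemma biInter_inter_biInter_eq_biInter_union [DecidableEq ι] (t P : Finset ι)
    (g B : ι → Set Ω) :
    (⋂ i ∈ t, g i) ∩ ⋂ i ∈ P, B i =
      ⋂ i ∈ t ∪ P, (if i ∈ t then g i else Set.univ) ∩ (if i ∈ P then B i else Set.univ) := by
  ext ω
  simp only [Set.mem_inter_iff, Set.mem_iInter, Finset.mem_union]
  constructor
  · rintro ⟨hg, hB⟩ i -
    constructor <;> split_ifs with h <;> first | trivial | exact hg i h | exact hB i h
  · intro h
    exact ⟨fun i hi => by simpa [hi] using (h i (.inl hi)).1,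
      fun i hi => by simpa [hi] using (h i (.inr hi)).2⟩

variable {μ : Measure Ω} {m : ι → MeasurableSpace Ω} {A B : ι → Set Ω} {r : ι → ℝ≥0∞}
  {P : Finset ι}

lemma measure_cylinder_inter_biInter_eq (hind : iIndep m μ)
    (hA : ∀ i, MeasurableSet[m i] (A i)) (hB : ∀ i ∈ P, MeasurableSet[m i] (B i))
    (hBA : ∀ i ∈ P, B i ⊆ A i) (hr : ∀ i ∈ P, μ (B i) = r i * μ (A i)) {s : Set Ω}
    (hs : s ∈ piiUnionInter (fun i => {t | MeasurableSet[MeasurableSpace.generateFrom {A i}] t})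
      Set.univ) :
    μ (s ∩ ⋂ i ∈ P, B i) = (∏ i ∈ P, r i) * μ (s ∩ ⋂ i ∈ P, A i) := by
  classical
  obtain ⟨t, -, g, hg, rfl⟩ := hs
  -- pad both families with `univ` to the common index set `t ∪ P`, where independence factorises
  have hg' : ∀ i, MeasurableSet[MeasurableSpace.generateFrom {A i}]
      (if i ∈ t then g i else Set.univ) := fun i => by
    split_ifs with hi
    exacts [hg i hi, MeasurableSet.univ]
  have hmeas : ∀ (C : ι → Set Ω), (∀ i ∈ P, MeasurableSet[m i] (C i)) → ∀ i,
      MeasurableSet[m i] ((if i ∈ t then g i else Set.univ) ∩ if i ∈ P then C i else Set.univ) :=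
    fun C hC i => by
      refine (MeasurableSpace.generateFrom_singleton_le (hA i) _ (hg' i)).inter ?_
      split_ifs with hi
      exacts [hC i hi, MeasurableSet.univ]
  have hfactor : ∀ i ∈ t ∪ P,
      μ ((if i ∈ t then g i else Set.univ) ∩ if i ∈ P then B i else Set.univ) =
        (if i ∈ P then r i else 1) *
          μ ((if i ∈ t then g i else Set.univ) ∩ if i ∈ P then A i else Set.univ) := by
    intro i _
    by_cases hi : i ∈ P
    · simp only [if_pos hi]
      exact measure_inter_eq_mul_of_measurableSet_generateFrom_singleton (hBA i hi) (hr i hi)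
        (hg' i)
    · simp only [if_neg hi, one_mul]
  rw [biInter_inter_biInter_eq_biInter_union, biInter_inter_biInter_eq_biInter_union,
    hind.meas_biInter fun i _ => hmeas B hB i,
    hind.meas_biInter fun i _ => hmeas A (fun i _ => hA i) i,
    Finset.prod_congr rfl hfactor, Finset.prod_mul_distrib, Finset.prod_ite_mem,
    Finset.union_inter_cancel_right]

theorem measure_inter_biInter_eq_prod_mul [IsFiniteMeasure μ] (hind : iIndep m μ)
    (hm : ∀ i, m i ≤ mΩ) (hA : ∀ i, MeasurableSet[m i] (A i))
    (hB : ∀ i ∈ P, MeasurableSet[m i] (B i)) (hBA : ∀ i ∈ P, B i ⊆ A i)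
    (hr : ∀ i ∈ P, μ (B i) = r i * μ (A i)) {s : Set Ω}
    (hs : MeasurableSet[MeasurableSpace.generateFrom (Set.range A)] s) :
    μ (s ∩ ⋂ i ∈ P, B i) = (∏ i ∈ P, r i) * μ (s ∩ ⋂ i ∈ P, A i) := by
  set C := piiUnionInter (fun i => {t | MeasurableSet[MeasurableSpace.generateFrom {A i}] t})
    Set.univ with hC
  have hgen : MeasurableSpace.generateFrom (Set.range A) = MeasurableSpace.generateFrom C := by
    rw [hC, generateFrom_piiUnionInter_measurableSet (fun i => MeasurableSpace.generateFrom {A i}),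
      iSup_univ, MeasurableSpace.iSup_generateFrom, Set.iUnion_singleton_eq_range]
  have hle : MeasurableSpace.generateFrom (Set.range A) ≤ mΩ :=
    MeasurableSpace.generateFrom_le <| by rintro _ ⟨i, rfl⟩; exact hm i _ (hA i)
  have hAP : MeasurableSet (⋂ i ∈ P, A i) :=
    Finset.measurableSet_biInter _ fun i _ => hm i _ (hA i)
  have hBP : MeasurableSet (⋂ i ∈ P, B i) :=
    Finset.measurableSet_biInter _ fun i hi => hm i _ (hB i hi)
  have heval : ∀ c, MeasurableSet[MeasurableSpace.generateFrom (Set.range A)] c →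
      (μ.restrict (⋂ i ∈ P, B i)).trim hle c = μ (c ∩ ⋂ i ∈ P, B i) ∧
      ((∏ i ∈ P, r i) • (μ.restrict (⋂ i ∈ P, A i)).trim hle) c =
        (∏ i ∈ P, r i) * μ (c ∩ ⋂ i ∈ P, A i) := fun c hc =>
    ⟨by rw [trim_measurableSet_eq hle hc, Measure.restrict_apply' hBP],
      by rw [Measure.smul_apply, trim_measurableSet_eq hle hc, Measure.restrict_apply' hAP,
        smul_eq_mul]⟩
  have hagree : ∀ c ∈ C, (μ.restrict (⋂ i ∈ P, B i)).trim hle c =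
      ((∏ i ∈ P, r i) • (μ.restrict (⋂ i ∈ P, A i)).trim hle) c := fun c hc => by
    have hc' := hgen ▸ MeasurableSpace.measurableSet_generateFrom hc
    rw [(heval c hc').1, (heval c hc').2, measure_cylinder_inter_biInter_eq hind hA hB hBA hr hc]
  have huniv : Set.univ ∈ C := ⟨∅, by simp, fun _ => Set.univ, by simp, by simp⟩
  have hext := ext_of_generate_finite C hgen
    (isPiSystem_piiUnionInter _ (fun i => @MeasurableSpace.isPiSystem_measurableSet _
      (MeasurableSpace.generateFrom {A i})) _) hagree (hagree _ huniv)
  rw [← (heval s hs).1, ← (heval s hs).2, hext]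

theorem condExp_indicator_biInter_ae_eq [IsFiniteMeasure μ] (hind : iIndep m μ)
    (hm : ∀ i, m i ≤ mΩ) (hA : ∀ i, MeasurableSet[m i] (A i))
    (hB : ∀ i ∈ P, MeasurableSet[m i] (B i)) (hBA : ∀ i ∈ P, B i ⊆ A i)
    (hr : ∀ i ∈ P, μ (B i) = r i * μ (A i)) {F : MeasurableSpace Ω}
    (hF : F ≤ MeasurableSpace.generateFrom (Set.range A))
    (hAF : MeasurableSet[F] (⋂ i ∈ P, A i)) :
    μ[(⋂ i ∈ P, B i).indicator (1 : Ω → ℝ) | F] =ᵐ[μ]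
      (∏ i ∈ P, (r i).toReal) • (⋂ i ∈ P, A i).indicator 1 := by
  have hFle : F ≤ mΩ := hF.trans <|
    MeasurableSpace.generateFrom_le <| by rintro _ ⟨i, rfl⟩; exact hm i _ (hA i)
  have hAP : MeasurableSet[mΩ] (⋂ i ∈ P, A i) := hFle _ hAF
  have hBP : MeasurableSet[mΩ] (⋂ i ∈ P, B i) :=
    Finset.measurableSet_biInter _ fun i hi => hm i _ (hB i hi)
  have hint : ∀ {C : Set Ω}, MeasurableSet[mΩ] C → Integrable (C.indicator (1 : Ω → ℝ)) μ :=
    fun hC => (integrable_const (1 : ℝ)).indicator hC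
  refine (ae_eq_condExp_of_forall_setIntegral_eq hFle (hint hBP)
    (fun s _ _ => ((hint hAP).smul _).integrableOn)
    (fun s hs _ => ?_)
    ((stronglyMeasurable_one.indicator hAF).const_smul _).aestronglyMeasurable).symm
  simp only [Pi.smul_apply, smul_eq_mul, integral_const_mul, integral_indicator_one hAP,
    integral_indicator_one hBP, measureReal_restrict_apply hAP, measureReal_restrict_apply hBP,
    measureReal_def, Set.inter_comm _ s,
    measure_inter_biInter_eq_prod_mul hind hm hA hB hBA hr (hF _ hs), ENNReal.toReal_mul,
    ENNReal.toReal_prod]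

end Thinning

lemma finite_setOf_paths_of_finite_steps {G : Type*} [AddGroup G] {s : Set G} (hs : s.Finite)
    (N : ℕ) :
    {S : Fin (N + 1) → G | S 0 = 0 ∧ ∀ i : Fin N, S i.succ - S i.castSucc ∈ s}.Finite := by
  refine Set.Finite.of_injOn (f := fun S (i : Fin N) => S i.succ - S i.castSucc)
    (t := Set.univ.pi fun _ => s) (fun S hS => Set.mem_univ_pi.mpr hS.2) ?_ (Set.Finite.pi
      fun _ => hs)
  intro S hS T hT hST
  funext j
  induction j using Fin.induction with
  | zero => rw [hS.1, hT.1]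
  | succ i ih =>
    have hi := congrFun hST i
    simp only at hi
    rw [← sub_add_cancel (S i.succ) (S i.castSucc), hi, ih, sub_add_cancel]

lemma measure_setOf_le_of_map_eq_uniform {Ω : Type*} [MeasurableSpace Ω] {μ : Measure Ω}
    {V : Ω → ℝ} (hV : Measurable V)
    (hunif : μ.map V = (volume : Measure ℝ).restrict (Set.Icc 0 1)) {c : ℝ} (hc : c ≤ 1) :
    μ {ω | V ω ≤ c} = ENNReal.ofReal c := by
  have hIcc : Set.Iic c ∩ Set.Icc 0 1 = Set.Icc 0 c := by
    ext u
    simp only [Set.mem_inter_iff, Set.mem_Iic, Set.mem_Icc]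
    grind
  change μ (V ⁻¹' Set.Iic c) = _
  rw [← Measure.map_apply hV measurableSet_Iic, hunif,
    Measure.restrict_apply measurableSet_Iic, hIcc, Real.volume_Icc, sub_zero]

section Coupling

variable {Ω : Type*} {d : ℕ} (f : Zd d → ℝ) (U : ℕ → Zd d → Zd d → Ω → ℝ)

def edgeOpen (q : ℝ) (e : ℕ × Zd d × Zd d) : Set Ω :=
  {ω | U e.1 e.2.1 e.2.2 ω ≤ f (e.2.2 - e.2.1) * q}

def pathEdges (N : ℕ) (S : Fin (N + 1) → Zd d) : Finset (ℕ × Zd d × Zd d) :=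
  Finset.univ.image fun i : Fin N => ((i : ℕ), S i.castSucc, S i.succ)

def pathOpen (q : ℝ) (N : ℕ) (S : Fin (N + 1) → Zd d) : Set Ω :=
  ⋂ e ∈ pathEdges N S, edgeOpen f U q e

def admissiblePaths (hfin : (Function.support f).Finite) (N : ℕ) :
    Finset (Fin (N + 1) → Zd d) :=
  (finite_setOf_paths_of_finite_steps hfin N).toFinset

lemma card_pathEdges (N : ℕ) (S : Fin (N + 1) → Zd d) : (pathEdges N S).card = N := by
  rw [pathEdges, Finset.card_image_of_injective _ fun i j h => Fin.ext (congrArg Prod.fst h),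
    Finset.card_univ, Fintype.card_fin]

variable {f U}

lemma mem_pathOpen_iff {q : ℝ} {N : ℕ} {S : Fin (N + 1) → Zd d} {ω : Ω} :
    ω ∈ pathOpen f U q N S ↔ ∀ i : Fin N, coupledEnv d f U q ω i (S i.castSucc) (S i.succ) := by
  simp [pathOpen, pathEdges, edgeOpen, coupledEnv]

/-- As `U > 0`, an open edge has `f > 0`, so the open paths lie in the finite set
`admissiblePaths` and the `Nat.card` in `pathCount` is a genuine count. -/
lemma pathCount_coupledEnv_eq_sum_indicator (hfin : (Function.support f).Finite) (q : ℝ)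
    (N : ℕ) {ω : Ω} (hpos : ∀ n x y, 0 < U n x y ω) :
    (pathCount d N (coupledEnv d f U q ω) : ℝ) =
      ∑ S ∈ admissiblePaths f hfin N, (pathOpen f U q N S).indicator 1 ω := by
  classical
  have hset : {S : Fin (N + 1) → Zd d | S 0 = 0 ∧
      ∀ i : Fin N, coupledEnv d f U q ω i (S i.castSucc) (S i.succ) = true} =
      ↑((admissiblePaths f hfin N).filter (ω ∈ pathOpen f U q N ·)) := by
    ext S
    simp only [Finset.coe_filter, admissiblePaths, Set.Finite.mem_toFinset, Set.mem_ofPred_eq,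
      mem_pathOpen_iff, Function.mem_support]
    refine ⟨fun ⟨h0, hopen⟩ => ⟨⟨h0, fun i hzero => ?_⟩, hopen⟩,
      fun ⟨⟨h0, _⟩, hopen⟩ => ⟨h0, hopen⟩⟩
    have hUle := hopen i
    simp only [coupledEnv, hzero, zero_mul, decide_eq_true_eq] at hUle
    exact (hpos _ _ _).not_ge hUle
  have hcard : pathCount d N (coupledEnv d f U q ω) =
      ((admissiblePaths f hfin N).filter (ω ∈ pathOpen f U q N ·)).card := by
    rw [← Set.ncard_coe_finset, ← hset, ← Nat.card_coe_set_eq]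
    rfl
  rw [hcard, Finset.card_filter]
  push_cast
  simp only [Set.indicator_apply, Pi.one_apply]

lemma edgeOpen_subset_edgeOpen (hf0 : ∀ z, 0 ≤ f z) {p' p : ℝ} (hle : p' ≤ p)
    (e : ℕ × Zd d × Zd d) : edgeOpen f U p' e ⊆ edgeOpen f U p e :=
  fun _ hω => hω.trans (mul_le_mul_of_nonneg_left hle (hf0 _))

lemma comap_coupledEnv_le_generateFrom (q : ℝ) :
    MeasurableSpace.comap (coupledEnv d f U q) inferInstance ≤
      MeasurableSpace.generateFrom (Set.range (edgeOpen f U q)) := by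
  let := MeasurableSpace.generateFrom (Set.range (edgeOpen f U q))
  exact Measurable.comap_le <| measurable_pi_iff.mpr fun n => measurable_pi_iff.mpr fun x =>
    measurable_pi_iff.mpr fun y => measurable_to_bool <|
      MeasurableSpace.measurableSet_generateFrom ⟨(n, x, y), by ext; simp [edgeOpen, coupledEnv]⟩

lemma measurableSet_comap_coupledEnv_pathOpen (q : ℝ) (N : ℕ) (S : Fin (N + 1) → Zd d) :
    MeasurableSet[MeasurableSpace.comap (coupledEnv d f U q) inferInstance]
      (pathOpen f U q N S) :=
  Finset.measurableSet_biInter _ fun e _ =>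
    ⟨{X | X e.1 e.2.1 e.2.2 = true},
      (by fun_prop : Measurable fun X : Env d => X e.1 e.2.1 e.2.2) (measurableSet_singleton true),
      by ext; simp [edgeOpen, coupledEnv]⟩

variable [MeasurableSpace Ω] {μ : Measure Ω}

lemma ae_forall_pos_of_map_eq_uniform (hUmeas : ∀ n x y, Measurable (U n x y))
    (hUunif : ∀ n x y, μ.map (U n x y) = (volume : Measure ℝ).restrict (Set.Icc 0 1)) :
    ∀ᵐ ω ∂μ, ∀ n x y, 0 < U n x y ω := by
  refine ae_all_iff.mpr fun n => ae_all_iff.mpr fun x => ae_all_iff.mpr fun y => ?_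
  simp only [ae_iff, not_lt]
  rw [measure_setOf_le_of_map_eq_uniform (hUmeas n x y) (hUunif n x y) zero_le_one,
    ENNReal.ofReal_zero]

lemma measure_edgeOpen_eq_mul (hf0 : ∀ z, 0 ≤ f z) (hUmeas : ∀ n x y, Measurable (U n x y))
    (hUunif : ∀ n x y, μ.map (U n x y) = (volume : Measure ℝ).restrict (Set.Icc 0 1))
    {p' p : ℝ} (hp' : 0 < p') (hle : p' ≤ p) (hpmax : ∀ z, p * f z ≤ 1)
    (e : ℕ × Zd d × Zd d) :
    μ (edgeOpen f U p' e) = ENNReal.ofReal (p' / p) * μ (edgeOpen f U p e) := by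
  have hp : 0 < p := hp'.trans_le hle
  have hfp : f (e.2.2 - e.2.1) * p ≤ 1 := by rw [mul_comm]; exact hpmax _
  rw [edgeOpen, edgeOpen,
    measure_setOf_le_of_map_eq_uniform (hUmeas _ _ _) (hUunif _ _ _)
      ((mul_le_mul_of_nonneg_left hle (hf0 _)).trans hfp),
    measure_setOf_le_of_map_eq_uniform (hUmeas _ _ _) (hUunif _ _ _) hfp,
    ← ENNReal.ofReal_mul (div_nonneg hp'.le hp.le)]
  congr 1
  field_simp

theorem condExp_indicator_pathOpen [IsFiniteMeasure μ] (hf0 : ∀ z, 0 ≤ f z)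
    (hUmeas : ∀ n x y, Measurable (U n x y))
    (hUindep : iIndepFun (fun e : ℕ × Zd d × Zd d => U e.1 e.2.1 e.2.2) μ)
    (hUunif : ∀ n x y, μ.map (U n x y) = (volume : Measure ℝ).restrict (Set.Icc 0 1))
    {p' p : ℝ} (hp' : 0 < p') (hle : p' ≤ p) (hpmax : ∀ z, p * f z ≤ 1)
    (N : ℕ) (S : Fin (N + 1) → Zd d) :
    μ[(pathOpen f U p' N S).indicator (1 : Ω → ℝ) |
        MeasurableSpace.comap (coupledEnv d f U p) inferInstance]
      =ᵐ[μ] (p' / p) ^ N • (pathOpen f U p N S).indicator 1 := by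
  have h := condExp_indicator_biInter_ae_eq (P := pathEdges N S)
    (r := fun _ => ENNReal.ofReal (p' / p)) ((iIndepFun_iff_iIndep _ _ _).mp hUindep)
    (fun e => (hUmeas e.1 e.2.1 e.2.2).comap_le) (fun e => ⟨_, measurableSet_Iic, rfl⟩)
    (fun e _ => ⟨_, measurableSet_Iic, rfl⟩) (fun e _ => edgeOpen_subset_edgeOpen hf0 hle e)
    (fun e _ => measure_edgeOpen_eq_mul hf0 hUmeas hUunif hp' hle hpmax e)
    (comap_coupledEnv_le_generateFrom p) (measurableSet_comap_coupledEnv_pathOpen p N S)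
  rwa [Finset.prod_const, card_pathEdges,
    ENNReal.toReal_ofReal (div_nonneg hp'.le (hp'.trans_le hle).le)] at h

lemma measurableSet_pathOpen (hUmeas : ∀ n x y, Measurable (U n x y)) (q : ℝ) (N : ℕ)
    (S : Fin (N + 1) → Zd d) : MeasurableSet (pathOpen f U q N S) :=
  Finset.measurableSet_biInter _ fun _ _ => measurableSet_le (hUmeas _ _ _) measurable_const

lemma W_coupledEnv_ae_eq (hfin : (Function.support f).Finite)
    (hUmeas : ∀ n x y, Measurable (U n x y))
    (hUunif : ∀ n x y, μ.map (U n x y) = (volume : Measure ℝ).restrict (Set.Icc 0 1))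
    (q : ℝ) (N : ℕ) :
    (fun ω => W d q N (coupledEnv d f U q ω)) =ᵐ[μ]
      (q ^ N)⁻¹ • ∑ S ∈ admissiblePaths f hfin N, (pathOpen f U q N S).indicator 1 := by
  filter_upwards [ae_forall_pos_of_map_eq_uniform hUmeas hUunif] with ω hpos
  simp only [W, pathCount_coupledEnv_eq_sum_indicator hfin q N hpos, Pi.smul_apply,
    Finset.sum_apply, smul_eq_mul, div_eq_inv_mul]

end Coupling

theorem stmt5_general {Ω : Type} [MeasurableSpace Ω] (μ : Measure Ω) [IsProbabilityMeasure μ]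
    (d : ℕ) (f : Zd d → ℝ) (hf0 : ∀ z, 0 ≤ f z)
    (hfin : (Function.support f).Finite)
    (U : ℕ → Zd d → Zd d → Ω → ℝ)
    (hUmeas : ∀ n x y, Measurable (U n x y))
    (hUindep : iIndepFun
      (fun e : ℕ × Zd d × Zd d => U e.1 e.2.1 e.2.2) μ)
    (hUunif : ∀ n x y, μ.map (U n x y) = (volume : Measure ℝ).restrict (Set.Icc 0 1))
    (p' p : ℝ) (hp' : 0 < p') (hle : p' ≤ p) (hpmax : ∀ z, p * f z ≤ 1) (N : ℕ) :
    μ[fun ω => W d p' N (coupledEnv d f U p' ω)|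
        MeasurableSpace.comap (coupledEnv d f U p) inferInstance]
      =ᵐ[μ] fun ω => W d p N (coupledEnv d f U p ω) := by
  have hint : ∀ S ∈ admissiblePaths f hfin N,
      Integrable ((pathOpen f U p' N S).indicator (1 : Ω → ℝ)) μ :=
    fun S _ => (integrable_const (1 : ℝ)).indicator (measurableSet_pathOpen hUmeas p' N S)
  calc μ[fun ω => W d p' N (coupledEnv d f U p' ω) |
        MeasurableSpace.comap (coupledEnv d f U p) inferInstance]
      =ᵐ[μ] μ[(p' ^ N)⁻¹ • ∑ S ∈ admissiblePaths f hfin N, (pathOpen f U p' N S).indicator 1 |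
        MeasurableSpace.comap (coupledEnv d f U p) inferInstance] :=
        condExp_congr_ae (W_coupledEnv_ae_eq hfin hUmeas hUunif p' N)
    _ =ᵐ[μ] (p' ^ N)⁻¹ • ∑ S ∈ admissiblePaths f hfin N,
        μ[(pathOpen f U p' N S).indicator 1 |
          MeasurableSpace.comap (coupledEnv d f U p) inferInstance] :=
        (condExp_smul _ _ _).trans ((condExp_finsetSum hint _).const_smul _)
    _ =ᵐ[μ] (p' ^ N)⁻¹ • ∑ S ∈ admissiblePaths f hfin N,
        (p' / p) ^ N • (pathOpen f U p N S).indicator 1 :=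
        (eventuallyEq_sum fun S _ =>
          condExp_indicator_pathOpen hf0 hUmeas hUindep hUunif hp' hle hpmax N S).const_smul _
    _ = (p ^ N)⁻¹ • ∑ S ∈ admissiblePaths f hfin N, (pathOpen f U p N S).indicator 1 := by
        rw [← Finset.smul_sum, smul_smul, div_pow, inv_mul_eq_div,
          div_div_cancel_left' (pow_ne_zero _ hp'.ne')]
    _ =ᵐ[μ] fun ω => W d p N (coupledEnv d f U p ω) :=
        (W_coupledEnv_ae_eq hfin hUmeas hUunif p N).symm

/-- In the monotone coupling via uniforms, for `p' ≤ p` (with `p' > 0`),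
`E[W_N(p') ∣ 𝓕_p] = W_N(p)`. -/
theorem stmt5 {Ω : Type} [MeasurableSpace Ω] (μ : Measure Ω) [IsProbabilityMeasure μ]
    (d : ℕ) (f : Zd d → ℝ) (hf0 : ∀ z, 0 ≤ f z)
    (hfin : (Function.support f).Finite) (hsum : ∑ᶠ z, f z = 1)
    (U : ℕ → Zd d → Zd d → Ω → ℝ)
    (hUmeas : ∀ n x y, Measurable (U n x y))
    (hUindep : iIndepFun
      (fun e : ℕ × Zd d × Zd d => U e.1 e.2.1 e.2.2) μ)
    (hUunif : ∀ n x y, μ.map (U n x y) = (volume : Measure ℝ).restrict (Set.Icc 0 1))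
    (p' p : ℝ) (hp' : 0 < p') (hle : p' ≤ p) (hpmax : ∀ z, p * f z ≤ 1) (N : ℕ) :
    μ[fun ω => W d p' N (coupledEnv d f U p' ω)|
        MeasurableSpace.comap (coupledEnv d f U p) inferInstance]
      =ᵐ[μ] fun ω => W d p N (coupledEnv d f U p ω) :=
  stmt5_general μ d f hf0 hfin U hUmeas hUindep hUunif p' p hp' hle hpmax N
end
end

section
/- Under the monotone coupling of oriented percolation environments at different parameters, the map $p \mapsto \mathbb{P}(W_\infty(p) > 0)$ is non-decreasing on $(0, p_{\max}]$. -/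
open MeasureTheory ProbabilityTheory Filter

noncomputable section

/-!
Write `W_N(q)` as a finite sum over lattice paths of the indicators that the path is open at
level `q`. Given the environment at level `p ≥ p'`, a path that is open at level `p` is open at
level `p'` with probability `(p'/p)^N`, independently of the other edges; hence
`𝔼[W_N(p'); A] = 𝔼[W_N(p); A]` for events `A` determined by the level-`p` environment, such as
`A = {W_N(p) < ε}`, and then `𝔼[W_N(p'); W_N(p) < ε] ≤ ε`. Fatou's lemma passes this to the limit:
`𝔼[W_∞(p'); W_∞(p) < ε] ≤ ε` for every `ε > 0`, so `W_∞(p') = 0` almost surely on `{W_∞(p) = 0}`.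
-/

open Topology

section LimitComparison

variable {Ω : Type*} [MeasurableSpace Ω] {μ : Measure Ω} {Y Z : ℕ → Ω → ℝ} {Yinf Zinf : Ω → ℝ}

theorem lintegral_indicator_limit_sublevel_le (hY : ∀ n, Measurable (Y n))
    (hZ : ∀ n, Measurable (Z n)) (hYlim : ∀ᵐ ω ∂μ, Tendsto (Y · ω) atTop (𝓝 (Yinf ω)))
    (hZlim : ∀ᵐ ω ∂μ, Tendsto (Z · ω) atTop (𝓝 (Zinf ω))) {ε : ℝ}
    (hbound : ∀ n, ∫⁻ ω in {ω | Z n ω < ε}, ENNReal.ofReal (Y n ω) ∂μ ≤ ENNReal.ofReal ε) :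
    ∫⁻ ω, {ω | Zinf ω < ε}.indicator (fun ω => ENNReal.ofReal (Yinf ω)) ω ∂μ ≤
      ENNReal.ofReal ε := by
  set g : ℕ → Ω → ENNReal := fun n => {ω | Z n ω < ε}.indicator (fun ω => ENNReal.ofReal (Y n ω))
  have hsub : ∀ n, MeasurableSet {ω | Z n ω < ε} := fun n =>
    measurableSet_lt (hZ n) measurable_const
  calc ∫⁻ ω, {ω | Zinf ω < ε}.indicator (fun ω => ENNReal.ofReal (Yinf ω)) ω ∂μ
      ≤ ∫⁻ ω, liminf (g · ω) atTop ∂μ := by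
        refine lintegral_mono_ae ?_
        filter_upwards [hYlim, hZlim] with ω hYω hZω
        by_cases hω : Zinf ω < ε
        · have hev : (fun n => ENNReal.ofReal (Y n ω)) =ᶠ[atTop] (g · ω) := by
            filter_upwards [hZω.eventually_lt_const hω] with n hn
            exact (Set.indicator_of_mem (show ω ∈ {ω | Z n ω < ε} from hn)
              (fun ω => ENNReal.ofReal (Y n ω))).symm
          rw [Set.indicator_of_mem (show ω ∈ {ω | Zinf ω < ε} from hω),
            ((ENNReal.tendsto_ofReal hYω).congr' hev).liminf_eq]
        · rw [Set.indicator_of_notMem (show ω ∉ {ω | Zinf ω < ε} from hω)]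
          exact zero_le
    _ ≤ liminf (fun n => ∫⁻ ω, g n ω ∂μ) atTop :=
        lintegral_liminf_le fun n => (hY n).ennreal_ofReal.indicator (hsub n)
    _ ≤ ENNReal.ofReal ε := liminf_le_of_frequently_le' <| Frequently.of_forall fun n => by
        rw [lintegral_indicator (hsub n)]
        exact hbound n

theorem measure_limit_pos_le_of_setLIntegral_sublevel_le (hY : ∀ n, Measurable (Y n))
    (hZ : ∀ n, Measurable (Z n)) (hYlim : ∀ᵐ ω ∂μ, Tendsto (Y · ω) atTop (𝓝 (Yinf ω)))
    (hZlim : ∀ᵐ ω ∂μ, Tendsto (Z · ω) atTop (𝓝 (Zinf ω)))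
    (hbound : ∀ n ε, ∫⁻ ω in {ω | Z n ω < ε}, ENNReal.ofReal (Y n ω) ∂μ ≤ ENNReal.ofReal ε) :
    μ {ω | 0 < Yinf ω} ≤ μ {ω | 0 < Zinf ω} := by
  set h : Ω → ENNReal := {ω | Zinf ω ≤ 0}.indicator (fun ω => ENNReal.ofReal (Yinf ω))
  have hmeas : AEMeasurable h μ :=
    (aemeasurable_of_tendsto_metrizable_ae' (fun n => (hY n).aemeasurable) hYlim).ennreal_ofReal
      |>.indicator₀ (nullMeasurableSet_le
        (aemeasurable_of_tendsto_metrizable_ae' (fun n => (hZ n).aemeasurable) hZlim)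
        aemeasurable_const)
  have hzero : ∫⁻ ω, h ω ∂μ = 0 := by
    refine le_antisymm (ENNReal.le_of_forall_pos_le_add fun ε hε _ => ?_) zero_le
    calc ∫⁻ ω, h ω ∂μ
        ≤ ∫⁻ ω, {ω | Zinf ω < ε}.indicator (fun ω => ENNReal.ofReal (Yinf ω)) ω ∂μ :=
          lintegral_mono <| Set.indicator_le_indicator_of_subset
            (fun ω (hω : Zinf ω ≤ 0) => hω.trans_lt (NNReal.coe_pos.2 hε)) fun _ => zero_le
      _ ≤ ENNReal.ofReal ε :=
          lintegral_indicator_limit_sublevel_le hY hZ hYlim hZlim (hbound · ε)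
      _ = 0 + ε := by rw [zero_add, ENNReal.ofReal_coe_nnreal]
  have hnull : μ ({ω | 0 < Yinf ω} \ {ω | 0 < Zinf ω}) = 0 := by
    refine measure_mono_null ?_ (ae_iff.1 ((lintegral_eq_zero_iff' hmeas).1 hzero))
    rintro ω ⟨hY, hZ⟩
    simp only [Set.mem_ofPred_eq, not_lt] at hY hZ ⊢
    simp [h, Set.indicator_of_mem (show ω ∈ {ω | Zinf ω ≤ 0} from hZ), hY]
  calc μ {ω | 0 < Yinf ω}
      ≤ μ ({ω | 0 < Yinf ω} ∩ {ω | 0 < Zinf ω}) + μ ({ω | 0 < Yinf ω} \ {ω | 0 < Zinf ω}) :=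
        measure_le_inter_add_sdiff _ _ _
    _ ≤ μ {ω | 0 < Zinf ω} := by
        rw [hnull, add_zero]
        exact measure_mono Set.inter_subset_right

end LimitComparison

section Uniform

variable {Ω : Type*} [MeasurableSpace Ω] {μ : Measure Ω}

theorem measure_le_of_map_eq_uniform {X : Ω → ℝ} (hX : Measurable X)
    (hunif : μ.map X = volume.restrict (Set.Icc 0 1)) {c : ℝ} (hc : c ≤ 1) :
    μ {ω | X ω ≤ c} = ENNReal.ofReal c := by
  rw [show {ω | X ω ≤ c} = X ⁻¹' Set.Iic c from rfl, ← Measure.map_apply hX measurableSet_Iic,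
    hunif, Measure.restrict_apply measurableSet_Iic, Set.inter_comm, ← Set.Ici_inter_Iic,
    Set.inter_assoc, Set.Iic_inter_Iic, inf_of_le_right hc, Set.Ici_inter_Iic, Real.volume_Icc,
    sub_zero]

theorem ae_forall_pos_of_map_eq_uniform_s6 {ι : Type*} [Countable ι] {X : ι → Ω → ℝ}
    (hX : ∀ i, Measurable (X i)) (hunif : ∀ i, μ.map (X i) = volume.restrict (Set.Icc 0 1)) :
    ∀ᵐ ω ∂μ, ∀ i, 0 < X i ω := by
  refine ae_all_iff.2 fun i => ?_
  have hnull : μ {ω | X i ω ≤ 0} = 0 := by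
    rw [measure_le_of_map_eq_uniform (hX i) (hunif i) zero_le_one, ENNReal.ofReal_zero]
  filter_upwards [measure_eq_zero_iff_ae_notMem.1 hnull] with ω hω
  exact not_le.1 hω

end Uniform

namespace CoupledPercolation

variable {Ω : Type*} {d : ℕ}

abbrev Edge (d : ℕ) := ℕ × Zd d × Zd d

def pathEdge {n : ℕ} (S : Fin (n + 1) → Zd d) (i : Fin n) : Edge d := (i, S i.castSucc, S i.succ)

theorem pathEdge_injective {n : ℕ} (S : Fin (n + 1) → Zd d) : Function.Injective (pathEdge S) :=
  fun _ _ h => Fin.ext (congrArg Prod.fst h)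

def EdgeOpen (V : Edge d → Ω → ℝ) (f : Zd d → ℝ) (q : ℝ) (e : Edge d) (ω : Ω) : Prop :=
  V e ω ≤ f (e.2.2 - e.2.1) * q

def pathOpenSet (V : Edge d → Ω → ℝ) (f : Zd d → ℝ) (q : ℝ) {n : ℕ}
    (S : Fin (n + 1) → Zd d) : Set Ω :=
  {ω | ∀ i, EdgeOpen V f q (pathEdge S i) ω}

def supportedPaths (f : Zd d → ℝ) (n : ℕ) : Set (Fin (n + 1) → Zd d) :=
  {S | S 0 = 0 ∧ ∀ i : Fin n, f (S i.succ - S i.castSucc) ≠ 0}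

theorem finite_supportedPaths {f : Zd d → ℝ} (hfin : (Function.support f).Finite) (n : ℕ) :
    (supportedPaths f n).Finite := by
  have hinj : Set.InjOn (fun (S : Fin (n + 1) → Zd d) (i : Fin n) => S i.succ - S i.castSucc)
      (supportedPaths f n) := by
    intro S hS T hT hST
    funext j
    induction j using Fin.induction with
    | zero => rw [hS.1, hT.1]
    | succ i ih =>
      rw [← sub_add_cancel (S i.succ) (S i.castSucc),
        show S i.succ - S i.castSucc = _ from congrFun hST i, ih, sub_add_cancel]
  refine Set.Finite.of_finite_image ((Set.Finite.pi fun _ : Fin n => hfin).subset ?_) hinj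
  rintro _ ⟨S, hS, rfl⟩ i -
  exact hS.2 i

-- `W` counts open paths with `Nat.card`, which is not visibly measurable in `ω`; this finite
-- sum agrees with it as soon as all the uniforms are positive.
def coupledW (V : Edge d → Ω → ℝ) {f : Zd d → ℝ} (hfin : (Function.support f).Finite) (q : ℝ)
    (n : ℕ) (ω : Ω) : ℝ :=
  (∑ S ∈ (finite_supportedPaths hfin n).toFinset, (pathOpenSet V f q S).indicator 1 ω) / q ^ n

theorem W_coupledEnv_eq_coupledW {f : Zd d → ℝ} (hfin : (Function.support f).Finite)
    {U : ℕ → Zd d → Zd d → Ω → ℝ} {q : ℝ} {ω : Ω}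
    (hpos : ∀ e : Edge d, 0 < U e.1 e.2.1 e.2.2 ω) (n : ℕ) :
    W d q n (coupledEnv d f U q ω) = coupledW (fun e => U e.1 e.2.1 e.2.2) hfin q n ω := by
  classical
  set V : Edge d → Ω → ℝ := fun e => U e.1 e.2.1 e.2.2
  -- an open edge carries a positive uniform, so open paths only step inside the support of `f`
  have hset : {S : Fin (n + 1) → Zd d |
        S 0 = 0 ∧ ∀ i : Fin n, coupledEnv d f U q ω i (S i.castSucc) (S i.succ) = true} =
      ↑((finite_supportedPaths hfin n).toFinset.filter (ω ∈ pathOpenSet V f q ·)) := by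
    ext S
    simp only [coupledEnv, decide_eq_true_eq, Finset.coe_filter, Set.Finite.mem_toFinset,
      supportedPaths, Set.mem_ofPred_eq]
    refine ⟨fun ⟨h0, hS⟩ => ⟨⟨h0, fun i hf => ?_⟩, hS⟩, fun ⟨⟨h0, _⟩, hS⟩ => ⟨h0, hS⟩⟩
    have := (hpos (pathEdge S i)).trans_le (hS i)
    simp only [hf, zero_mul] at this
    exact lt_irrefl _ this
  rw [W, coupledW, pathCount, ← Set.coe_ofPred, Nat.card_coe_set_eq, hset, Set.ncard_coe_finset,
    Finset.card_filter]
  push_cast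
  refine congrArg (· / q ^ n) (Finset.sum_congr rfl fun S _ => ?_)
  by_cases hω : ω ∈ pathOpenSet V f q S <;> simp [hω]

variable {V : Edge d → Ω → ℝ} {f : Zd d → ℝ}

theorem measurableSet_pathOpenSet {m : MeasurableSpace Ω} {q : ℝ} {n : ℕ}
    {S : Fin (n + 1) → Zd d} (hV : ∀ i, Measurable[m] (V (pathEdge S i))) :
    MeasurableSet[m] (pathOpenSet V f q S) := by
  simp only [pathOpenSet, EdgeOpen, Set.ofPred_forall]
  exact MeasurableSet.iInter fun i => measurableSet_le (hV i) measurable_const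

theorem measurable_coupledW {m : MeasurableSpace Ω} (hV : ∀ e, Measurable[m] (V e))
    (hfin : (Function.support f).Finite) (q : ℝ) (n : ℕ) : Measurable[m] (coupledW V hfin q n) :=
  (Finset.measurable_sum _ fun _ _ =>
    measurable_one.indicator (measurableSet_pathOpenSet fun _ => hV _)).div_const _

theorem coupledW_congr {V' : Edge d → Ω → ℝ} (hfin : (Function.support f).Finite) {q : ℝ}
    {ω : Ω} (h : ∀ e, EdgeOpen V f q e ω ↔ EdgeOpen V' f q e ω) (n : ℕ) :
    coupledW V hfin q n ω = coupledW V' hfin q n ω := by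
  have hS : ∀ {n} (S : Fin (n + 1) → Zd d),
      ω ∈ pathOpenSet V f q S ↔ ω ∈ pathOpenSet V' f q S :=
    fun S => forall_congr' fun i => h (pathEdge S i)
  unfold coupledW
  congr 1
  refine Finset.sum_congr rfl fun S _ => ?_
  by_cases hω : ω ∈ pathOpenSet V f q S
  · rw [Set.indicator_of_mem hω, Set.indicator_of_mem ((hS S).1 hω)]
  · rw [Set.indicator_of_notMem hω, Set.indicator_of_notMem (mt (hS S).2 hω)]

theorem pathOpenSet_mono (hf0 : ∀ z, 0 ≤ f z) {q p : ℝ} (hqp : q ≤ p) {n : ℕ}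
    (S : Fin (n + 1) → Zd d) : pathOpenSet V f q S ⊆ pathOpenSet V f p S :=
  fun _ hω i => (hω i).trans (mul_le_mul_of_nonneg_left hqp (hf0 _))

open Classical in
def forceOpen (P : Set (Edge d)) (V : Edge d → Ω → ℝ) : Edge d → Ω → ℝ :=
  fun e => if e ∈ P then 0 else V e

theorem edgeOpen_forceOpen_iff (hf0 : ∀ z, 0 ≤ f z) {q : ℝ} (hq : 0 ≤ q) {P : Set (Edge d)}
    {ω : Ω} (hP : ∀ e ∈ P, EdgeOpen V f q e ω) (e : Edge d) :
    EdgeOpen (forceOpen P V) f q e ω ↔ EdgeOpen V f q e ω := by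
  by_cases he : e ∈ P
  · simp only [EdgeOpen, forceOpen, if_pos he]
    exact iff_of_true (mul_nonneg (hf0 _) hq) (hP e he)
  · simp only [EdgeOpen, forceOpen, if_neg he]

theorem measurable_forceOpen [MeasurableSpace Ω] (P : Set (Edge d)) (e : Edge d) :
    Measurable[⨆ e ∈ Pᶜ, MeasurableSpace.comap (V e) inferInstance] (forceOpen P V e) := by
  by_cases he : e ∈ P
  · simp only [forceOpen, if_pos he]
    exact measurable_const
  · simp only [forceOpen, if_neg he]
    exact Measurable.of_comap_le (le_iSup₂
      (f := fun e (_ : e ∈ Pᶜ) => MeasurableSpace.comap (V e) inferInstance) e he)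

variable [MeasurableSpace Ω] {μ : Measure Ω}

theorem measure_pathOpenSet (hV : ∀ e, Measurable (V e)) (hindep : iIndepFun V μ)
    (hunif : ∀ e, μ.map (V e) = volume.restrict (Set.Icc 0 1)) {q : ℝ} (hq : 0 ≤ q)
    (hq1 : ∀ z, q * f z ≤ 1) {n : ℕ} (S : Fin (n + 1) → Zd d) :
    μ (pathOpenSet V f q S) =
      ENNReal.ofReal q ^ n * ∏ i : Fin n, ENNReal.ofReal (f (S i.succ - S i.castSucc)) := by
  calc μ (pathOpenSet V f q S) = ∏ i, μ {ω | EdgeOpen V f q (pathEdge S i) ω} := by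
        rw [pathOpenSet, Set.ofPred_forall]
        exact (hindep.precomp (pathEdge_injective S)).meas_iInter fun i =>
          measurableSet_le (comap_measurable _) measurable_const
    _ = ∏ i : Fin n, ENNReal.ofReal (f (S i.succ - S i.castSucc) * q) :=
        Finset.prod_congr rfl fun i _ =>
          measure_le_of_map_eq_uniform (hV _) (hunif _) ((mul_comm _ _).trans_le (hq1 _))
    _ = _ := by
        rw [Finset.prod_congr rfl fun i _ => ENNReal.ofReal_mul' hq, Finset.prod_mul_distrib,
          Fin.prod_const, mul_comm]

theorem measure_pathOpenSet_inter_eq_mul (hV : ∀ e, Measurable (V e)) (hindep : iIndepFun V μ)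
    {q : ℝ} {n : ℕ} (S : Fin (n + 1) → Zd d) {B : Set Ω}
    (hB : MeasurableSet[⨆ e ∈ (Set.range (pathEdge S))ᶜ,
      MeasurableSpace.comap (V e) inferInstance] B) :
    μ (pathOpenSet V f q S ∩ B) = μ (pathOpenSet V f q S) * μ B :=
  (Indep_iff _ _ μ).1 (indep_iSup_of_disjoint (fun e => (hV e).comap_le) hindep.iIndep
    disjoint_compl_right) _ _ (measurableSet_pathOpenSet fun i => Measurable.of_comap_le
      (le_iSup₂ (f := fun e (_ : e ∈ Set.range (pathEdge S)) =>
        MeasurableSpace.comap (V e) inferInstance) (pathEdge S i) ⟨i, rfl⟩)) hB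

-- On the event that `S` is open at level `p`, forcing its edges open does not change `W_n(p)`,
-- and the forced version no longer depends on the uniforms of those edges.
theorem measure_pathOpenSet_inter_sublevel (hV : ∀ e, Measurable (V e))
    (hindep : iIndepFun V μ) (hunif : ∀ e, μ.map (V e) = volume.restrict (Set.Icc 0 1))
    (hf0 : ∀ z, 0 ≤ f z) (hfin : (Function.support f).Finite) {q p : ℝ} (hq : 0 ≤ q)
    (hqp : q ≤ p) (hp1 : ∀ z, p * f z ≤ 1) {n : ℕ} (S : Fin (n + 1) → Zd d) (ε : ℝ) :
    μ (pathOpenSet V f q S ∩ {ω | coupledW V hfin p n ω < ε}) =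
      ENNReal.ofReal q ^ n * ((∏ i : Fin n, ENNReal.ofReal (f (S i.succ - S i.castSucc))) *
        μ {ω | coupledW (forceOpen (Set.range (pathEdge S)) V) hfin p n ω < ε}) := by
  have hset : pathOpenSet V f q S ∩ {ω | coupledW V hfin p n ω < ε} =
      pathOpenSet V f q S ∩
        {ω | coupledW (forceOpen (Set.range (pathEdge S)) V) hfin p n ω < ε} := by
    ext ω
    simp only [Set.mem_inter_iff]
    refine and_congr_right fun hω => ?_
    have hopen : ∀ e ∈ Set.range (pathEdge S), EdgeOpen V f p e ω := by
      rintro _ ⟨i, rfl⟩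
      exact pathOpenSet_mono hf0 hqp S hω i
    simp only [Set.mem_ofPred_eq,
      coupledW_congr hfin (edgeOpen_forceOpen_iff hf0 (hq.trans hqp) hopen) n]
  rw [hset, measure_pathOpenSet_inter_eq_mul hV hindep S (measurableSet_lt
      (measurable_coupledW (measurable_forceOpen _) hfin p n) measurable_const),
    measure_pathOpenSet hV hindep hunif hq
      (fun z => (mul_le_mul_of_nonneg_right hqp (hf0 z)).trans (hp1 z)), mul_assoc]

theorem setLIntegral_coupledW (hV : ∀ e, Measurable (V e)) (hfin : (Function.support f).Finite)
    {q : ℝ} (hq : 0 < q) (n : ℕ) (A : Set Ω) :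
    ∫⁻ ω in A, ENNReal.ofReal (coupledW V hfin q n ω) ∂μ =
      (ENNReal.ofReal q ^ n)⁻¹ *
        ∑ S ∈ (finite_supportedPaths hfin n).toFinset, μ (pathOpenSet V f q S ∩ A) := by
  have hmeas : ∀ {n} (S : Fin (n + 1) → Zd d), MeasurableSet (pathOpenSet V f q S) :=
    fun _ => measurableSet_pathOpenSet fun _ => hV _
  have hpt : ∀ ω, ENNReal.ofReal (coupledW V hfin q n ω) = (ENNReal.ofReal q ^ n)⁻¹ *
      ∑ S ∈ (finite_supportedPaths hfin n).toFinset, (pathOpenSet V f q S).indicator 1 ω := by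
    intro ω
    rw [coupledW, div_eq_inv_mul, ENNReal.ofReal_mul (by positivity),
      ENNReal.ofReal_inv_of_pos (by positivity), ENNReal.ofReal_pow hq.le,
      ENNReal.ofReal_sum_of_nonneg fun _ _ =>
        Set.indicator_nonneg (f := 1) (fun _ _ => zero_le_one) _]
    congr 1
    refine Finset.sum_congr rfl fun S _ => ?_
    by_cases hω : ω ∈ pathOpenSet V f q S <;> simp [hω]
  simp only [hpt]
  rw [lintegral_const_mul _ (Finset.measurable_sum _ fun S _ =>
      measurable_one.indicator (hmeas S)),
    lintegral_finsetSum _ fun S _ => measurable_one.indicator (hmeas S)]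
  simp only [lintegral_indicator_one (hmeas _), Measure.restrict_apply (hmeas _)]

-- `𝔼[W_n(p') | 𝓕_p] = W_n(p)`, tested on the `𝓕_p`-measurable event `{W_n(p) < ε}`.
theorem setLIntegral_coupledW_sublevel_eq (hV : ∀ e, Measurable (V e))
    (hindep : iIndepFun V μ) (hunif : ∀ e, μ.map (V e) = volume.restrict (Set.Icc 0 1))
    (hf0 : ∀ z, 0 ≤ f z) (hfin : (Function.support f).Finite) {p' p : ℝ} (hp' : 0 < p')
    (hp'p : p' ≤ p) (hp1 : ∀ z, p * f z ≤ 1) (n : ℕ) (ε : ℝ) :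
    ∫⁻ ω in {ω | coupledW V hfin p n ω < ε}, ENNReal.ofReal (coupledW V hfin p' n ω) ∂μ =
      ∫⁻ ω in {ω | coupledW V hfin p n ω < ε}, ENNReal.ofReal (coupledW V hfin p n ω) ∂μ := by
  suffices h : ∀ q, 0 < q → q ≤ p →
      ∫⁻ ω in {ω | coupledW V hfin p n ω < ε}, ENNReal.ofReal (coupledW V hfin q n ω) ∂μ =
        ∑ S ∈ (finite_supportedPaths hfin n).toFinset,
          (∏ i : Fin n, ENNReal.ofReal (f (S i.succ - S i.castSucc))) *
            μ {ω | coupledW (forceOpen (Set.range (pathEdge S)) V) hfin p n ω < ε} by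
    rw [h p' hp' hp'p, h p (hp'.trans_le hp'p) le_rfl]
  intro q hq hqp
  rw [setLIntegral_coupledW hV hfin hq, Finset.mul_sum]
  refine Finset.sum_congr rfl fun S _ => ?_
  rw [measure_pathOpenSet_inter_sublevel hV hindep hunif hf0 hfin hq.le hqp hp1,
    ENNReal.inv_mul_cancel_left (pow_ne_zero _ (ENNReal.ofReal_pos.2 hq).ne')
      (ENNReal.pow_ne_top ENNReal.ofReal_ne_top)]

theorem setLIntegral_coupledW_sublevel_le [IsProbabilityMeasure μ] (hV : ∀ e, Measurable (V e))
    (hindep : iIndepFun V μ) (hunif : ∀ e, μ.map (V e) = volume.restrict (Set.Icc 0 1))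
    (hf0 : ∀ z, 0 ≤ f z) (hfin : (Function.support f).Finite) {p' p : ℝ} (hp' : 0 < p')
    (hp'p : p' ≤ p) (hp1 : ∀ z, p * f z ≤ 1) (n : ℕ) (ε : ℝ) :
    ∫⁻ ω in {ω | coupledW V hfin p n ω < ε}, ENNReal.ofReal (coupledW V hfin p' n ω) ∂μ ≤
      ENNReal.ofReal ε :=
  calc _ = ∫⁻ ω in {ω | coupledW V hfin p n ω < ε}, ENNReal.ofReal (coupledW V hfin p n ω) ∂μ :=
        setLIntegral_coupledW_sublevel_eq hV hindep hunif hf0 hfin hp' hp'p hp1 n ε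
    _ ≤ ∫⁻ _ in {ω | coupledW V hfin p n ω < ε}, ENNReal.ofReal ε ∂μ :=
        setLIntegral_mono measurable_const fun _ hω => ENNReal.ofReal_le_ofReal (le_of_lt hω)
    _ = ENNReal.ofReal ε * μ {ω | coupledW V hfin p n ω < ε} := setLIntegral_const _ _
    _ ≤ ENNReal.ofReal ε := mul_le_of_le_one_right' prob_le_one

end CoupledPercolation

open CoupledPercolation

theorem stmt6_general {Ω : Type} [MeasurableSpace Ω] (μ : Measure Ω) [IsProbabilityMeasure μ]
    (d : ℕ) (f : Zd d → ℝ) (hf0 : ∀ z, 0 ≤ f z)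
    (hfin : (Function.support f).Finite)
    (U : ℕ → Zd d → Zd d → Ω → ℝ)
    (hUmeas : ∀ n x y, Measurable (U n x y))
    (hUindep : iIndepFun
      (fun e : ℕ × Zd d × Zd d => U e.1 e.2.1 e.2.2) μ)
    (hUunif : ∀ n x y, μ.map (U n x y) = (volume : Measure ℝ).restrict (Set.Icc 0 1))
    (Winf : ℝ → Ω → ℝ)
    (hWinf : ∀ q : ℝ, 0 < q → (∀ z, q * f z ≤ 1) →
      ∀ᵐ ω ∂μ, Tendsto (fun N => W d q N (coupledEnv d f U q ω)) atTop (nhds (Winf q ω))) :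
    ∀ p' p : ℝ, 0 < p' → p' ≤ p → (∀ z, p * f z ≤ 1) →
      μ {ω | 0 < Winf p' ω} ≤ μ {ω | 0 < Winf p ω} := by
  intro p' p hp' hp'p hp1
  set V : Edge d → Ω → ℝ := fun e => U e.1 e.2.1 e.2.2
  have hV : ∀ e, Measurable (V e) := fun e => hUmeas _ _ _
  have hunif : ∀ e, μ.map (V e) = volume.restrict (Set.Icc 0 1) := fun e => hUunif _ _ _
  have hlim : ∀ q, 0 < q → q ≤ p →
      ∀ᵐ ω ∂μ, Tendsto (fun n => coupledW V hfin q n ω) atTop (𝓝 (Winf q ω)) := by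
    intro q hq hqp
    filter_upwards [hWinf q hq fun z => (mul_le_mul_of_nonneg_right hqp (hf0 z)).trans (hp1 z),
      ae_forall_pos_of_map_eq_uniform_s6 hV hunif] with ω hω hpos
    simpa only [W_coupledEnv_eq_coupledW hfin hpos] using hω
  exact measure_limit_pos_le_of_setLIntegral_sublevel_le
    (fun n => measurable_coupledW hV hfin p' n) (fun n => measurable_coupledW hV hfin p n)
    (hlim p' hp' hp'p) (hlim p (hp'.trans_le hp'p) le_rfl)
    (setLIntegral_coupledW_sublevel_le hV hUindep hunif hf0 hfin hp' hp'p hp1)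

/-- Under the monotone coupling, `p ↦ ℙ(W_∞(p) > 0)` is non-decreasing. -/
theorem stmt6 {Ω : Type} [MeasurableSpace Ω] (μ : Measure Ω) [IsProbabilityMeasure μ]
    (d : ℕ) (f : Zd d → ℝ) (hf0 : ∀ z, 0 ≤ f z)
    (hfin : (Function.support f).Finite) (hsum : ∑ᶠ z, f z = 1)
    (U : ℕ → Zd d → Zd d → Ω → ℝ)
    (hUmeas : ∀ n x y, Measurable (U n x y))
    (hUindep : iIndepFun
      (fun e : ℕ × Zd d × Zd d => U e.1 e.2.1 e.2.2) μ)
    (hUunif : ∀ n x y, μ.map (U n x y) = (volume : Measure ℝ).restrict (Set.Icc 0 1))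
    (Winf : ℝ → Ω → ℝ)
    (hWinf : ∀ q : ℝ, 0 < q → (∀ z, q * f z ≤ 1) →
      ∀ᵐ ω ∂μ, Tendsto (fun N => W d q N (coupledEnv d f U q ω)) atTop (nhds (Winf q ω))) :
    ∀ p' p : ℝ, 0 < p' → p' ≤ p → (∀ z, p * f z ≤ 1) →
      μ {ω | 0 < Winf p' ω} ≤ μ {ω | 0 < Winf p ω} :=
  stmt6_general μ d f hf0 hfin U hUmeas hUindep hUunif Winf hWinf
end
end
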